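/- Fix λ₀ ≥ 1, set λ = 2λ₀, and let M₀ = [[0, Id_{λ₀}],[Id_{λ₀}, 0]]. For m ∈ ℤ^λ and β ∈ {0,1}^λ define s(m, β) = exp(πi ((1/2) mᵀ M₀ m + mᵀ β)), which takes values ±1. Let B = {β ∈ {0,1}^λ : β_k β_{λ₀+k} = 0 for k = 1,…,λ₀}. Then for every m ∈ ℤ^λ, the number of β ∈ B with s(m, β) = -1 is at most (3^{λ₀} - 1)/2; equivalently, Σ_{β ∈ B} s(m, β) > 0. -/

import Mathlib

open Matrix Finset

/-- The sign `s(m, β) = (-1)^(Σ_k m_k m_{λ₀+k} + mᵀ β)`. -/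
def sgn (l0 : ℕ) (m : Fin (2 * l0) → ℤ) (β : Fin (2 * l0) → Fin 2) : ℤ :=
  if ((∑ k : Fin l0,
        m ⟨(k : ℕ), by have := k.isLt; omega⟩ *
          m ⟨l0 + (k : ℕ), by have := k.isLt; omega⟩) +
      ∑ i, m i * ((β i : ℕ) : ℤ)) % 2 = 0 then 1 else -1

/-- The set `B` of admissible half-integer characteristics. -/
def Bset (l0 : ℕ) : Finset (Fin (2 * l0) → Fin 2) :=
  Finset.univ.filter fun β => ∀ k : Fin l0,
    ((β ⟨(k : ℕ), by have := k.isLt; omega⟩ : ℕ)) *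
      ((β ⟨l0 + (k : ℕ), by have := k.isLt; omega⟩ : ℕ)) = 0

/-! ### Auxiliary machinery -/

/-- `(-1)^n` as a function `ℤ → ℤ`. -/
def hfun (n : ℤ) : ℤ := if n % 2 = 0 then 1 else -1

lemma hfun_zero : hfun 0 = 1 := by simp [hfun]

lemma hfun_add (a b : ℤ) : hfun (a + b) = hfun a * hfun b := by
  unfold hfun
  rcases Int.emod_two_eq a with ha | ha <;> rcases Int.emod_two_eq b with hb | hb <;>
    simp [Int.add_emod, ha, hb]

lemma hfun_sum {ι : Type*} (s : Finset ι) (f : ι → ℤ) :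
    hfun (∑ i ∈ s, f i) = ∏ i ∈ s, hfun (f i) := by
  classical
  induction s using Finset.cons_induction with
  | empty => simp [hfun_zero]
  | cons a s ha ih => rw [Finset.sum_cons, Finset.prod_cons, hfun_add, ih]

/-- The 3-element set of admissible pairs. -/
def Tset : Finset (Fin 2 × Fin 2) := {(0, 0), (0, 1), (1, 0)}

lemma mem_Tset (t : Fin 2 × Fin 2) : t ∈ Tset ↔ (t.1 : ℕ) * (t.2 : ℕ) = 0 := by
  revert t; decide

lemma card_Tset : Tset.card = 3 := by decide

/-- low index in `Fin (2*l0)`. -/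
def lo (l0 : ℕ) (k : Fin l0) : Fin (2 * l0) := ⟨(k : ℕ), by have := k.isLt; omega⟩
/-- high index in `Fin (2*l0)`. -/
def hi (l0 : ℕ) (k : Fin l0) : Fin (2 * l0) := ⟨l0 + (k : ℕ), by have := k.isLt; omega⟩

lemma sum_split (l0 : ℕ) (F : Fin (2 * l0) → ℤ) :
    ∑ i, F i = ∑ k : Fin l0, F (lo l0 k) + ∑ k : Fin l0, F (hi l0 k) := by
  have h2 : l0 + l0 = 2 * l0 := by ring
  rw [← Equiv.sum_comp ((finSumFinEquiv (m := l0) (n := l0)).trans (finCongr h2)) F,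
    Fintype.sum_sum_type]
  congr 1

/-- per-coordinate sign factor. -/
def gfac (l0 : ℕ) (m : Fin (2 * l0) → ℤ) (k : Fin l0) (t : Fin 2 × Fin 2) : ℤ :=
  hfun (m (lo l0 k) * m (hi l0 k) + m (lo l0 k) * ((t.1 : ℕ) : ℤ) +
    m (hi l0 k) * ((t.2 : ℕ) : ℤ))

lemma sgn_eq_prod (l0 : ℕ) (m : Fin (2 * l0) → ℤ) (β : Fin (2 * l0) → Fin 2) :
    sgn l0 m β = ∏ k : Fin l0, gfac l0 m k (β (lo l0 k), β (hi l0 k)) := by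
  have h : sgn l0 m β =
      hfun ((∑ k : Fin l0, m (lo l0 k) * m (hi l0 k)) + ∑ i, m i * ((β i : ℕ) : ℤ)) := rfl
  rw [h, sum_split l0 (fun i => m i * ((β i : ℕ) : ℤ)), ← Finset.sum_add_distrib,
    ← Finset.sum_add_distrib, hfun_sum]
  exact Finset.prod_congr rfl fun k _ => congrArg hfun (by dsimp only; ring)

/-- decoding a family of pairs into a characteristic. -/
def decode (l0 : ℕ) (p : Fin l0 → Fin 2 × Fin 2) (i : Fin (2 * l0)) : Fin 2 :=
  if h : (i : ℕ) < l0 then (p ⟨(i : ℕ), h⟩).1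
  else (p ⟨(i : ℕ) - l0, by have := i.isLt; omega⟩).2

lemma decode_lo (l0 : ℕ) (p : Fin l0 → Fin 2 × Fin 2) (k : Fin l0) :
    decode l0 p (lo l0 k) = (p k).1 := by
  have hk := k.isLt
  rw [decode, dif_pos (show ((lo l0 k : ℕ)) < l0 from hk)]
  rfl

lemma decode_hi (l0 : ℕ) (p : Fin l0 → Fin 2 × Fin 2) (k : Fin l0) :
    decode l0 p (hi l0 k) = (p k).2 := by
  have hk := k.isLt
  have h : ¬ (l0 + (k : ℕ) < l0) := by omega
  rw [decode, dif_neg (show ¬ ((hi l0 k : ℕ) < l0) from h)]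
  have he : (⟨l0 + (k : ℕ) - l0, by omega⟩ : Fin l0) = k :=
    Fin.ext (show l0 + (k : ℕ) - l0 = (k : ℕ) by omega)
  exact congrArg (fun x => (p x).2) he

/-- encoding a characteristic as a family of pairs. -/
def encode (l0 : ℕ) (β : Fin (2 * l0) → Fin 2) (k : Fin l0) : Fin 2 × Fin 2 :=
  (β (lo l0 k), β (hi l0 k))

lemma decode_encode (l0 : ℕ) (β : Fin (2 * l0) → Fin 2) :
    decode l0 (encode l0 β) = β := by
  funext i
  by_cases h : (i : ℕ) < l0
  · simp only [decode, dif_pos h, encode]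
    exact congrArg β (Fin.ext (by simp [lo]))
  · simp only [decode, dif_neg h, encode]
    refine congrArg β (Fin.ext ?_)
    show l0 + ((i : ℕ) - l0) = (i : ℕ)
    omega

/-- Transporting a sum over `Bset` to a sum over `piFinset`. -/
lemma sum_Bset {M : Type*} [AddCommMonoid M] (l0 : ℕ) (f : (Fin (2 * l0) → Fin 2) → M) :
    ∑ β ∈ Bset l0, f β =
      ∑ p ∈ Fintype.piFinset (fun _ : Fin l0 => Tset), f (decode l0 p) := by
  classical
  refine Finset.sum_nbij' (encode l0) (decode l0) ?_ ?_ ?_ ?_ ?_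
  · intro β hβ
    rw [Fintype.mem_piFinset]
    intro k
    rw [mem_Tset]
    exact (Finset.mem_filter.mp hβ).2 k
  · intro p hp
    rw [Bset, Finset.mem_filter]
    refine ⟨Finset.mem_univ _, fun k => ?_⟩
    have := Fintype.mem_piFinset.mp hp k
    rw [mem_Tset] at this
    show (decode l0 p (lo l0 k) : ℕ) * (decode l0 p (hi l0 k) : ℕ) = 0
    rw [decode_lo, decode_hi]
    exact this
  · intro β _
    exact decode_encode l0 β
  · intro p _
    funext k
    rw [Prod.ext_iff]
    exact ⟨decode_lo l0 p k, decode_hi l0 p k⟩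
  · intro β _
    exact congrArg f (decode_encode l0 β).symm

lemma one_le_factor (a b : ℤ) :
    1 ≤ ∑ t ∈ Tset, hfun (a * b + a * ((t.1 : ℕ) : ℤ) + b * ((t.2 : ℕ) : ℤ)) := by
  rw [show Tset = {(0, 0), (0, 1), (1, 0)} from rfl,
    Finset.sum_insert (by decide), Finset.sum_insert (by decide), Finset.sum_singleton]
  unfold hfun
  rcases Int.emod_two_eq a with ha | ha <;> rcases Int.emod_two_eq b with hb | hb <;>
    simp [Int.add_emod, Int.mul_emod, ha, hb]

theorem stmt9 (l0 : ℕ) (hl0 : 1 ≤ l0) (m : Fin (2 * l0) → ℤ) :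
    ((Bset l0).filter fun β => sgn l0 m β = -1).card ≤ (3 ^ l0 - 1) / 2 ∧
    0 < ∑ β ∈ Bset l0, sgn l0 m β := by
  classical
  -- the sum factorizes
  have hfact : ∑ β ∈ Bset l0, sgn l0 m β =
      ∏ k : Fin l0, ∑ t ∈ Tset, gfac l0 m k t := by
    rw [sum_Bset l0 (sgn l0 m), Finset.prod_univ_sum]
    refine Finset.sum_congr rfl fun p _ => ?_
    rw [sgn_eq_prod]
    refine Finset.prod_congr rfl fun k _ => ?_
    rw [decode_lo, decode_hi]
  have hone : ∀ k : Fin l0, 1 ≤ ∑ t ∈ Tset, gfac l0 m k t := fun k =>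
    one_le_factor (m (lo l0 k)) (m (hi l0 k))
  have hpos : 1 ≤ ∑ β ∈ Bset l0, sgn l0 m β := by
    rw [hfact]
    calc (1 : ℤ) = ∏ _k : Fin l0, 1 := by simp
    _ ≤ ∏ k : Fin l0, ∑ t ∈ Tset, gfac l0 m k t :=
      Finset.prod_le_prod (fun _ _ => zero_le_one) (fun k _ => hone k)
  refine ⟨?_, by linarith⟩
  -- cardinality of Bset
  have hcard : (Bset l0).card = 3 ^ l0 := by
    have h1 := sum_Bset l0 (fun _ => (1 : ℕ))
    simp only [Finset.sum_const, smul_eq_mul, mul_one] at h1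
    rw [h1, Fintype.card_piFinset]
    simp [card_Tset]
  -- relate sum to cardinalities
  set P := (Bset l0).filter fun β => sgn l0 m β = -1 with hP
  set Q := (Bset l0).filter fun β => ¬ sgn l0 m β = -1 with hQ
  have hsplit : ∑ β ∈ Bset l0, sgn l0 m β = ((Bset l0).card : ℤ) - 2 * P.card := by
    rw [← Finset.sum_filter_add_sum_filter_not (Bset l0) (fun β => sgn l0 m β = -1)]
    have h1 : ∑ β ∈ P, sgn l0 m β = -(P.card : ℤ) := by
      rw [Finset.sum_congr rfl (fun β hβ => (Finset.mem_filter.mp hβ).2)]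
      simp
      rfl
    have hval : ∀ β ∈ Q, sgn l0 m β = 1 := by
      intro β hβ
      have h := (Finset.mem_filter.mp hβ).2
      unfold sgn at h ⊢
      split at h <;> simp_all
    have h2 : ∑ β ∈ Q, sgn l0 m β = (Q.card : ℤ) := by
      rw [Finset.sum_congr rfl hval, Finset.sum_const, nsmul_eq_mul, mul_one]
    have hc : P.card + Q.card = (Bset l0).card :=
      Finset.card_filter_add_card_filter_not (s := Bset l0)
        (p := fun β => sgn l0 m β = -1)
    have hc' : (P.card : ℤ) + Q.card = ((Bset l0).card : ℤ) := by exact_mod_cast hc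
    rw [h1, h2]
    linarith
  have hcard' : ((Bset l0).card : ℤ) = 3 ^ l0 := by exact_mod_cast hcard
  have h2P : 2 * (P.card : ℤ) ≤ 3 ^ l0 - 1 := by
    rw [hsplit, hcard'] at hpos; linarith
  have h3 : 1 ≤ 3 ^ l0 := Nat.one_le_pow _ 3 (by norm_num)
  have hle : (P.card * 2 : ℤ) ≤ ((3 ^ l0 - 1 : ℕ) : ℤ) := by
    push_cast [h3]
    linarith
  have hnat : P.card * 2 ≤ 3 ^ l0 - 1 := by exact_mod_cast hle
  exact Nat.le_div_iff_mul_le (by norm_num) |>.mpr hnat
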